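/- The Bures distance d_B(σ,ρ) = √(1 − tr(|σ^{1/2}ρ^{1/2}|)) satisfies the triangle inequality on the set of d×d density matrices: d_B(σ,ρ) ≤ d_B(σ,θ) + d_B(θ,ρ) for all density matrices σ, θ, ρ. -/

import Mathlib

open scoped Matrix ComplexOrder

/-- The positive square root of a positive semidefinite matrix (junk value `0` otherwise). -/
noncomputable def matSqrt {d : ℕ} (x : Matrix (Fin d) (Fin d) ℂ) : Matrix (Fin d) (Fin d) ℂ :=
  @dite _ x.PosSemidef (Classical.propDecidable _) (fun h => (h.1.eigenvectorUnitary : Matrix (Fin d) (Fin d) ℂ) *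
    Matrix.diagonal ((↑) ∘ Real.sqrt ∘ h.1.eigenvalues) *
    (star h.1.eigenvectorUnitary : Matrix (Fin d) (Fin d) ℂ)) (fun _ => 0)

/-- The absolute value `|x| = (xᴴx)^{1/2}` of a matrix. -/
noncomputable def matAbs {d : ℕ} (x : Matrix (Fin d) (Fin d) ℂ) : Matrix (Fin d) (Fin d) ℂ :=
  matSqrt (xᴴ * x)

/-- Fidelity `F(σ,ρ) = tr |σ^{1/2} ρ^{1/2}|`. -/
noncomputable def fid {d : ℕ} (σ ρ : Matrix (Fin d) (Fin d) ℂ) : ℝ :=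
  (matAbs (matSqrt σ * matSqrt ρ)).trace.re

/-- Bures distance `d_B(σ,ρ) = √(1 - F(σ,ρ))`. -/
noncomputable def dB {d : ℕ} (σ ρ : Matrix (Fin d) (Fin d) ℂ) : ℝ :=
  Real.sqrt (1 - fid σ ρ)

/-!
Square roots `A, B, C` of the three states are unit vectors for the Hilbert–Schmidt inner
product `⟪x, y⟫ = tr (xᴴ y)`, and for unit vectors `√(1 - re ⟪x, y⟫) = ‖x - y‖ / √2`. By the polar
decomposition `M = U |M|`, `re tr (M W) ≤ tr |M|` for every unitary `W`, with equality for
`W = U⁻¹`. Hence the fidelity is a maximal overlap: choosing unitaries `W₁, W₂` that attain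
`F(σ, θ) = re ⟪A, B W₁⟫` and `F(θ, ρ) = re ⟪B W₁, C W₂ W₁⟫`, the triangle inequality for
`A, B W₁, C W₂ W₁` gives the claim, since `re ⟪A, C W₂ W₁⟫ ≤ F(σ, ρ)`.
-/

open RCLike Matrix
open scoped InnerProductSpace

section InnerProductSpace

variable {𝕜 E : Type*} [RCLike 𝕜] [SeminormedAddCommGroup E] [InnerProductSpace 𝕜 E]

theorem sqrt_one_sub_re_inner_eq {x y : E} (hx : ‖x‖ = 1) (hy : ‖y‖ = 1) :
    √(1 - re ⟪x, y⟫_𝕜) = ‖x - y‖ / √2 := by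
  have h : 1 - re ⟪x, y⟫_𝕜 = ‖x - y‖ ^ 2 / 2 := by rw [@norm_sub_sq 𝕜, hx, hy]; ring
  rw [h, Real.sqrt_div (sq_nonneg _), Real.sqrt_sq (norm_nonneg _)]

theorem sqrt_one_sub_re_inner_triangle {x y z : E} (hx : ‖x‖ = 1) (hy : ‖y‖ = 1) (hz : ‖z‖ = 1) :
    √(1 - re ⟪x, z⟫_𝕜) ≤ √(1 - re ⟪x, y⟫_𝕜) + √(1 - re ⟪y, z⟫_𝕜) := by
  simp only [sqrt_one_sub_re_inner_eq (𝕜 := 𝕜) hx hy, sqrt_one_sub_re_inner_eq (𝕜 := 𝕜) hy hz,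
    sqrt_one_sub_re_inner_eq (𝕜 := 𝕜) hx hz, ← add_div]
  gcongr
  exact norm_sub_le_norm_sub_add_norm_sub x y z

end InnerProductSpace

namespace Matrix

variable {𝕜 n : Type*} [RCLike 𝕜] [Fintype n] [DecidableEq n]

theorem trace_conjTranspose_mul_mul_unitary (X Y : Matrix n n 𝕜) {W : Matrix n n 𝕜}
    (hW : W ∈ unitaryGroup n 𝕜) : ((X * W)ᴴ * (Y * W)).trace = (Xᴴ * Y).trace := by
  have hWW : W * Wᴴ = 1 := mem_unitaryGroup_iff.mp hW
  rw [conjTranspose_mul, Matrix.mul_assoc, trace_mul_comm, ← Matrix.mul_assoc,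
    Matrix.mul_assoc _ W, hWW, Matrix.mul_one]

theorem PosSemidef.re_trace_mul_unitary_le {P W : Matrix n n 𝕜} (hP : P.PosSemidef)
    (hW : W ∈ unitaryGroup n 𝕜) : re (P * W).trace ≤ re P.trace := by
  set V : Matrix n n 𝕜 := (hP.1.eigenvectorUnitary : Matrix n n 𝕜)
  set lam := hP.1.eigenvalues
  have hV : star V * W * V ∈ unitaryGroup n 𝕜 :=
    Submonoid.mul_mem _ (Submonoid.mul_mem _ (Unitary.star_mem (SetLike.coe_mem _)) hW)
      (SetLike.coe_mem _)
  have hP' : P = V * diagonal (ofReal ∘ lam) * star V := hP.1.spectral_theorem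
  have htr : (P * W).trace = ∑ i, (lam i : 𝕜) * (star V * W * V) i i := by
    rw [hP', Matrix.mul_assoc, Matrix.mul_assoc, trace_mul_comm, Matrix.mul_assoc, trace_mul_comm]
    simp only [trace, diag_apply, mul_diagonal, Function.comp_apply, mul_comm]
  rw [htr, hP.1.trace_eq_sum_eigenvalues, map_sum, map_sum]
  refine Finset.sum_le_sum fun i _ => ?_
  rw [re_ofReal_mul, ofReal_re]
  calc lam i * re ((star V * W * V) i i)
      ≤ lam i * 1 := by
        gcongr
        · exact hP.eigenvalues_nonneg i
        · exact (re_le_norm _).trans (entry_norm_bound_of_unitary hV i i)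
    _ = lam i := mul_one _

theorem exists_unitary_eq_mul_diagonal_of_conjTranspose_mul_self_eq_diagonal
    {N : Matrix n n 𝕜} {s : n → ℝ} (h : Nᴴ * N = diagonal fun j => ((s j ^ 2 : ℝ) : 𝕜)) :
    ∃ U ∈ unitaryGroup n 𝕜, N = U * diagonal fun j => (s j : 𝕜) := by
  let c : n → EuclideanSpace 𝕜 n := fun j => WithLp.toLp 2 fun i => N i j
  have inner_c (j k : n) : ⟪c j, c k⟫_𝕜 = (Nᴴ * N) j k := by
    simp [c, EuclideanSpace.inner_toLp_toLp, mul_apply, dotProduct, mul_comm]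
  -- the normalized nonzero columns are orthonormal; `U` extends them to an orthonormal basis
  let S : Set n := {j | s j ≠ 0}
  have hortho : Orthonormal 𝕜 (S.domRestrict fun j => (s j : 𝕜)⁻¹ • c j) := by
    rw [orthonormal_iff_ite]
    rintro ⟨j, hj⟩ ⟨k, hk⟩
    simp only [Set.domRestrict_apply, inner_smul_left, inner_smul_right, inner_c, h, diagonal_apply,
      Subtype.mk.injEq]
    split_ifs with hjk
    · subst hjk
      have hsj : (s j : 𝕜) ≠ 0 := ofReal_ne_zero.mpr hj
      rw [map_inv₀, conj_ofReal, ofReal_pow]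
      field_simp
    · simp
  obtain ⟨b, hb⟩ := hortho.exists_orthonormalBasis_extension_of_card_eq (by simp)
  refine ⟨(EuclideanSpace.basisFun n 𝕜).toBasis.toMatrix b,
    (EuclideanSpace.basisFun n 𝕜).toMatrix_orthonormalBasis_mem_unitary b, ?_⟩
  ext i j
  rw [mul_diagonal, Module.Basis.toMatrix_apply, OrthonormalBasis.coe_toBasis_repr_apply,
    EuclideanSpace.basisFun_repr]
  by_cases hj : s j = 0
  · have hcj : c j = 0 := by rw [← inner_self_eq_zero (𝕜 := 𝕜), inner_c, h]; simp [hj]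
    simpa [hj, c] using congrArg (· i) hcj
  · rw [hb j hj]
    have hsj : (s j : 𝕜) ≠ 0 := ofReal_ne_zero.mpr hj
    simp only [PiLp.smul_apply, smul_eq_mul, c]
    field_simp

end Matrix

section MatSqrt

variable {d : ℕ}

theorem matSqrt_of_posSemidef {x : Matrix (Fin d) (Fin d) ℂ} (hx : x.PosSemidef) :
    matSqrt x = (hx.1.eigenvectorUnitary : Matrix (Fin d) (Fin d) ℂ) *
      diagonal ((↑) ∘ Real.sqrt ∘ hx.1.eigenvalues) *
      (star hx.1.eigenvectorUnitary : Matrix (Fin d) (Fin d) ℂ) :=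
  dif_pos hx

theorem posSemidef_matSqrt (x : Matrix (Fin d) (Fin d) ℂ) : (matSqrt x).PosSemidef := by
  by_cases hx : x.PosSemidef
  · rw [matSqrt_of_posSemidef hx]
    refine (posSemidef_diagonal_iff.mpr fun i => ?_).mul_mul_conjTranspose_same _
    simp only [Function.comp_apply]
    exact_mod_cast Real.sqrt_nonneg _
  · rw [matSqrt, dif_neg hx]
    exact .zero

theorem matSqrt_mul_self {x : Matrix (Fin d) (Fin d) ℂ} (hx : x.PosSemidef) :
    matSqrt x * matSqrt x = x := by
  set V := hx.1.eigenvectorUnitary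
  have hVV : (star V : Matrix (Fin d) (Fin d) ℂ) * V = 1 := Unitary.coe_star_mul_self V
  conv_rhs => rw [hx.1.spectral_theorem, Unitary.conjStarAlgAut_apply]
  rw [matSqrt_of_posSemidef hx]
  simp only [Matrix.mul_assoc]
  rw [← Matrix.mul_assoc _ (V : Matrix (Fin d) (Fin d) ℂ), hVV, Matrix.one_mul,
    ← Matrix.mul_assoc (diagonal _), diagonal_mul_diagonal]
  congr 3
  ext i
  simp only [Function.comp_apply]
  rw [← Complex.ofReal_mul, Real.mul_self_sqrt (hx.eigenvalues_nonneg i)]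
  rfl

theorem exists_unitary_eq_mul_matAbs (M : Matrix (Fin d) (Fin d) ℂ) :
    ∃ U ∈ unitaryGroup (Fin d) ℂ, M = U * matAbs M := by
  have hH := posSemidef_conjTranspose_mul_self M
  have hVHV := hH.1.conjStarAlgAut_star_eigenvectorUnitary
  rw [Unitary.conjStarAlgAut_star_apply] at hVHV
  have hM := matSqrt_of_posSemidef hH
  set V : Matrix (Fin d) (Fin d) ℂ := (hH.1.eigenvectorUnitary : Matrix (Fin d) (Fin d) ℂ)
  have hV : V ∈ unitaryGroup (Fin d) ℂ := SetLike.coe_mem _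
  set lam := hH.1.eigenvalues
  have hdiag : (M * V)ᴴ * (M * V) = diagonal fun j => ((√(lam j) ^ 2 : ℝ) : ℂ) := by
    have hlam : ∀ j, 0 ≤ lam j := hH.eigenvalues_nonneg
    simp only [Real.sq_sqrt (hlam _)]
    rw [conjTranspose_mul, ← star_eq_conjTranspose, Matrix.mul_assoc,
      ← Matrix.mul_assoc Mᴴ, ← Matrix.mul_assoc, hVHV]
    rfl
  obtain ⟨U, hU, hMV⟩ :=
    exists_unitary_eq_mul_diagonal_of_conjTranspose_mul_self_eq_diagonal hdiag
  refine ⟨U * star V, Submonoid.mul_mem _ hU (Unitary.star_mem hV), ?_⟩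
  calc M = M * V * star V := by rw [Matrix.mul_assoc, mem_unitaryGroup_iff.mp hV, Matrix.mul_one]
    _ = U * diagonal (fun j => (√(lam j) : ℂ)) * star V := by rw [hMV]; rfl
    _ = U * star V * matAbs M := by
      rw [matAbs, hM]
      simp only [Matrix.mul_assoc]
      rw [← Matrix.mul_assoc (star V) V, mem_unitaryGroup_iff'.mp hV, Matrix.one_mul]
      rfl

theorem re_trace_mul_unitary_le_matAbs (M : Matrix (Fin d) (Fin d) ℂ) {W : Matrix (Fin d) (Fin d) ℂ}
    (hW : W ∈ unitaryGroup (Fin d) ℂ) : (M * W).trace.re ≤ (matAbs M).trace.re := by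
  obtain ⟨U, hU, hMU⟩ := exists_unitary_eq_mul_matAbs M
  conv_lhs => rw [hMU, Matrix.mul_assoc, trace_mul_comm, Matrix.mul_assoc]
  exact (posSemidef_matSqrt _).re_trace_mul_unitary_le (Submonoid.mul_mem _ hW hU)

theorem exists_unitary_trace_mul_eq_matAbs (M : Matrix (Fin d) (Fin d) ℂ) :
    ∃ W ∈ unitaryGroup (Fin d) ℂ, (M * W).trace = (matAbs M).trace := by
  obtain ⟨U, hU, hMU⟩ := exists_unitary_eq_mul_matAbs M
  refine ⟨star U, Unitary.star_mem hU, ?_⟩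
  conv_lhs => rw [hMU, Matrix.mul_assoc, trace_mul_comm, Matrix.mul_assoc,
    mem_unitaryGroup_iff'.mp hU, Matrix.mul_one]

theorem trace_conjTranspose_matSqrt_mul_self {x : Matrix (Fin d) (Fin d) ℂ} (hx : x.PosSemidef) :
    ((matSqrt x)ᴴ * matSqrt x).trace = x.trace := by
  rw [(posSemidef_matSqrt x).1.eq, matSqrt_mul_self hx]

theorem re_trace_conjTranspose_mul_le_fid (σ ρ : Matrix (Fin d) (Fin d) ℂ)
    {W : Matrix (Fin d) (Fin d) ℂ} (hW : W ∈ unitaryGroup (Fin d) ℂ) :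
    ((matSqrt σ)ᴴ * (matSqrt ρ * W)).trace.re ≤ fid σ ρ := by
  rw [(posSemidef_matSqrt σ).1.eq, ← Matrix.mul_assoc]
  exact re_trace_mul_unitary_le_matAbs _ hW

theorem exists_unitary_re_trace_conjTranspose_mul_eq_fid (σ ρ : Matrix (Fin d) (Fin d) ℂ) :
    ∃ W ∈ unitaryGroup (Fin d) ℂ, ((matSqrt σ)ᴴ * (matSqrt ρ * W)).trace.re = fid σ ρ := by
  obtain ⟨W, hW, hMW⟩ := exists_unitary_trace_mul_eq_matAbs (matSqrt σ * matSqrt ρ)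
  refine ⟨W, hW, ?_⟩
  rw [(posSemidef_matSqrt σ).1.eq, ← Matrix.mul_assoc, hMW]
  rfl

end MatSqrt

/-- the Bures distance satisfies the triangle inequality on density matrices. -/
theorem bures_triangle {d : ℕ} (σ θ ρ : Matrix (Fin d) (Fin d) ℂ)
    (hσ : σ.PosSemidef) (hθ : θ.PosSemidef) (hρ : ρ.PosSemidef)
    (hσ1 : σ.trace = 1) (hθ1 : θ.trace = 1) (hρ1 : ρ.trace = 1) :
    dB σ ρ ≤ dB σ θ + dB θ ρ := by
  let _ := toMatrixSeminormedAddCommGroup (1 : Matrix (Fin d) (Fin d) ℂ) .one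
  let _ := toMatrixInnerProductSpace (1 : Matrix (Fin d) (Fin d) ℂ) .one
  have inner_eq (x y : Matrix (Fin d) (Fin d) ℂ) : ⟪x, y⟫_ℂ = (xᴴ * y).trace := by
    show (y * 1 * xᴴ).trace = _
    rw [Matrix.mul_one, trace_mul_comm]
  have norm_eq_one {x : Matrix (Fin d) (Fin d) ℂ} (hx : (xᴴ * x).trace = 1) : ‖x‖ = 1 := by
    rw [← pow_eq_one_iff_of_nonneg (norm_nonneg _) two_ne_zero, @norm_sq_eq_re_inner ℂ, inner_eq,
      hx, one_re]
  obtain ⟨W₁, hW₁, hAB⟩ := exists_unitary_re_trace_conjTranspose_mul_eq_fid σ θ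
  obtain ⟨W₂, hW₂, hBC⟩ := exists_unitary_re_trace_conjTranspose_mul_eq_fid θ ρ
  have hAC := re_trace_conjTranspose_mul_le_fid σ ρ (Submonoid.mul_mem _ hW₂ hW₁)
  set A := matSqrt σ
  set B := matSqrt θ
  set C := matSqrt ρ
  calc dB σ ρ ≤ √(1 - re ⟪A, C * W₂ * W₁⟫_ℂ) := by
        refine Real.sqrt_le_sqrt ?_
        rw [inner_eq, Matrix.mul_assoc C, re_to_complex]
        linarith
    _ ≤ √(1 - re ⟪A, B * W₁⟫_ℂ) + √(1 - re ⟪B * W₁, C * W₂ * W₁⟫_ℂ) :=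
      sqrt_one_sub_re_inner_triangle
        (norm_eq_one (by rw [trace_conjTranspose_matSqrt_mul_self hσ, hσ1]))
        (norm_eq_one (by
          rw [trace_conjTranspose_mul_mul_unitary _ _ hW₁, trace_conjTranspose_matSqrt_mul_self hθ,
            hθ1]))
        (norm_eq_one (by
          rw [trace_conjTranspose_mul_mul_unitary _ _ hW₁,
            trace_conjTranspose_mul_mul_unitary _ _ hW₂, trace_conjTranspose_matSqrt_mul_self hρ,
            hρ1]))
    _ = dB σ θ + dB θ ρ := by
      rw [inner_eq, inner_eq, trace_conjTranspose_mul_mul_unitary _ _ hW₁, re_to_complex,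
        re_to_complex, hAB, hBC]
      rfl
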